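/- If x_a ≥ x_θ ≥ 0 and x_b ≥ 0, then P(x_a, x_b, x_θ) ≥ (1 − Φ(x_a − x_θ))/2 + (1 − Φ(x_a + x_θ))/2. If instead 0 ≤ x_a < x_θ and x_b ≥ 0, then P(x_a, x_b, x_θ) ≥ 1/4. -/

import Mathlib

open MeasureTheory Real Filter

/-- Standard one-dimensional Gaussian pdf. -/
noncomputable def phi1 (x : ℝ) : ℝ := (Real.sqrt (2 * π))⁻¹ * Real.exp (-x ^ 2 / 2)

/-- `w(y, b) = e^{yb}/(e^{yb} + e^{−yb})`. -/
noncomputable def wgt (y b : ℝ) : ℝ :=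
  Real.exp (y * b) / (Real.exp (y * b) + Real.exp (-(y * b)))

/-- `P(x_a, x_b, x_θ) = ∫ w(y − x_a, x_b)·(φ(y − x_θ) + φ(y + x_θ))/2 dy`. -/
noncomputable def Pfun (xa xb xθ : ℝ) : ℝ :=
  ∫ y, wgt (y - xa) xb * ((phi1 (y - xθ) + phi1 (y + xθ)) / 2)

/-- `Γ(x_a, x_b, x_θ) = ∫ w(y − x_a, x_b)·y·(φ(y − x_θ) + φ(y + x_θ))/2 dy`. -/
noncomputable def Gfun (xa xb xθ : ℝ) : ℝ :=
  ∫ y, wgt (y - xa) xb * y * ((phi1 (y - xθ) + phi1 (y + xθ)) / 2)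

/-- `F(x_b, x_θ) = ∫ (2 w(y + x_θ, x_b) − 1)·(y + x_θ)·φ(y) dy`. -/
noncomputable def Ffun (xb xθ : ℝ) : ℝ :=
  ∫ y, (2 * wgt (y + xθ) xb - 1) * (y + xθ) * phi1 y

/-- Standard Gaussian cdf. -/
noncomputable def PhiCdf (x : ℝ) : ℝ := ∫ y in Set.Iic x, phi1 y

/-!
Substituting `y ↦ y + x_a` writes `P` as the average of `I(c) = ∫ w(y, b) φ(y + c) dy` over
`c = x_a ∓ x_θ`. Reflecting `y ↦ -y`, with `w(-y, b) = 1 - w(y, b)` and `φ` even, gives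
`2 I(c) = ∫ (w(y, b) φ(y + c) + w(-y, b) φ(y - c)) dy`, an integral of pointwise convex
combinations of `φ(y + c)` and `φ(y - c)`. For `c ≥ 0` both values are at least `φ(|y| + c)`,
whose integral is `2 (1 - Φ(c))`. For `c ≤ 0 ≤ b` the sign of `y` decides both which value is
larger and whether its weight is at least `1/2`, so the combination dominates the average of
the two, whose integral is `1`. Thus `I(c) ≥ 1 - Φ(c)`, resp. `I(c) ≥ 1/2`, and always `I ≥ 0`.
-/

open Set

lemma wgt_nonneg (y b : ℝ) : 0 ≤ wgt y b := by
  unfold wgt; positivity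

lemma wgt_neg (y b : ℝ) : wgt (-y) b = 1 - wgt y b := by
  rw [eq_sub_iff_add_eq', wgt, wgt, neg_mul, neg_neg, add_comm (rexp (-(y * b))), ← add_div,
    div_self (by positivity)]

lemma wgt_le_one (y b : ℝ) : wgt y b ≤ 1 := by
  linarith [wgt_neg y b, wgt_nonneg (-y) b]

lemma half_le_wgt {y b : ℝ} (h : 0 ≤ y * b) : 1 / 2 ≤ wgt y b := by
  rw [wgt, le_div_iff₀ (by positivity)]
  linarith [exp_le_exp.mpr (by linarith : -(y * b) ≤ y * b)]

lemma continuous_wgt (b : ℝ) : Continuous fun y => wgt y b :=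
  Continuous.div (by fun_prop) (by fun_prop) fun _ => by positivity

lemma MeasureTheory.Integrable.wgt_mul {g p : ℝ → ℝ} (hp : Integrable p) (hg : Continuous g)
    (b : ℝ) :
    Integrable fun y => wgt (g y) b * p y :=
  hp.bdd_mul ((continuous_wgt b).comp hg).aestronglyMeasurable <| ae_of_all _ fun y => by
    rw [norm_of_nonneg (wgt_nonneg _ _)]; exact wgt_le_one _ _

lemma phi1_nonneg (x : ℝ) : 0 ≤ phi1 x := by
  unfold phi1; positivity

lemma phi1_neg (x : ℝ) : phi1 (-x) = phi1 x := by
  simp [phi1]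

lemma phi1_le_phi1 {u v : ℝ} (h : |u| ≤ |v|) : phi1 v ≤ phi1 u := by
  unfold phi1
  exact mul_le_mul_of_nonneg_left (exp_le_exp.2 (by nlinarith [sq_le_sq.2 h])) (by positivity)

lemma phi1_eq_gaussianPDFReal : phi1 = ProbabilityTheory.gaussianPDFReal 0 1 := by
  ext x
  simp [phi1, ProbabilityTheory.gaussianPDFReal]

lemma integrable_phi1 : Integrable phi1 := by
  rw [phi1_eq_gaussianPDFReal]; exact ProbabilityTheory.integrable_gaussianPDFReal 0 1

lemma integral_phi1 : ∫ x, phi1 x = 1 := by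
  rw [phi1_eq_gaussianPDFReal]
  exact ProbabilityTheory.integral_gaussianPDFReal_eq_one 0 one_ne_zero

lemma integral_Ioi_phi1 (c : ℝ) : ∫ y in Ioi c, phi1 y = 1 - PhiCdf c := by
  have h := integral_add_compl (measurableSet_Iic (a := c)) integrable_phi1
  rw [compl_Iic, integral_phi1] at h
  rw [PhiCdf]; linarith

lemma integral_phi1_abs_add (c : ℝ) : ∫ y, phi1 (|y| + c) = 2 * (1 - PhiCdf c) := by
  have hshift : ∫ y in Ioi 0, phi1 (y + c) = ∫ y in Ioi c, phi1 y := by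
    simpa [preimage_add_const_Ioi] using
      (measurePreserving_add_right volume c).setIntegral_preimage_emb
        (measurableEmbedding_addRight c) phi1 (Ioi c)
  rw [integral_comp_abs (f := fun y => phi1 (y + c)), hshift, integral_Ioi_phi1]

lemma integrable_wgt_mul_phi1_symm (b c : ℝ) :
    Integrable fun y => wgt y b * phi1 (y + c) + wgt (-y) b * phi1 (y - c) :=
  ((integrable_phi1.comp_add_right c).wgt_mul continuous_id' b).add
    ((integrable_phi1.comp_sub_right c).wgt_mul continuous_neg b)

-- the mean of `w(Z - c, b)` for a standard Gaussian `Z`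
noncomputable def meanWgt (b c : ℝ) : ℝ := ∫ y, wgt y b * phi1 (y + c)

lemma meanWgt_nonneg (b c : ℝ) : 0 ≤ meanWgt b c :=
  integral_nonneg fun _ => mul_nonneg (wgt_nonneg _ _) (phi1_nonneg _)

lemma two_mul_meanWgt (b c : ℝ) :
    2 * meanWgt b c = ∫ y, (wgt y b * phi1 (y + c) + wgt (-y) b * phi1 (y - c)) := by
  have hreflect : ∫ y, wgt (-y) b * phi1 (y - c) = meanWgt b c := by
    rw [meanWgt, ← integral_neg_eq_self]
    congr 1; ext y
    rw [neg_neg, ← phi1_neg, neg_sub, sub_neg_eq_add, add_comm c]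
  rw [integral_add ((integrable_phi1.comp_add_right c).wgt_mul continuous_id' b)
    ((integrable_phi1.comp_sub_right c).wgt_mul continuous_neg b), hreflect, meanWgt]
  ring

lemma phi1_abs_add_le {c : ℝ} (hc : 0 ≤ c) (y b : ℝ) :
    phi1 (|y| + c) ≤ wgt y b * phi1 (y + c) + wgt (-y) b * phi1 (y - c) := by
  have hy : 0 ≤ |y| + c := add_nonneg (abs_nonneg y) hc
  have h_add : phi1 (|y| + c) ≤ phi1 (y + c) :=
    phi1_le_phi1 ((abs_add_le y c).trans (by rw [abs_of_nonneg hc, abs_of_nonneg hy]))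
  have h_sub : phi1 (|y| + c) ≤ phi1 (y - c) :=
    phi1_le_phi1 ((abs_sub y c).trans (by rw [abs_of_nonneg hc, abs_of_nonneg hy]))
  rw [wgt_neg]
  nlinarith [wgt_nonneg y b, wgt_le_one y b]

lemma phi1_average_le {b c : ℝ} (hb : 0 ≤ b) (hc : c ≤ 0) (y : ℝ) :
    (phi1 (y + c) + phi1 (y - c)) / 2 ≤ wgt y b * phi1 (y + c) + wgt (-y) b * phi1 (y - c) := by
  suffices 0 ≤ (wgt y b - 1 / 2) * (phi1 (y + c) - phi1 (y - c)) by rw [wgt_neg]; linarith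
  rcases le_total 0 y with hy | hy
  · refine mul_nonneg (by linarith [half_le_wgt (mul_nonneg hy hb)]) (sub_nonneg.2 ?_)
    exact phi1_le_phi1 (sq_le_sq.1 (by nlinarith))
  · refine mul_nonneg_of_nonpos_of_nonpos
      (by linarith [half_le_wgt (mul_nonneg (neg_nonneg.2 hy) hb), wgt_neg y b]) (sub_nonpos.2 ?_)
    exact phi1_le_phi1 (sq_le_sq.1 (by nlinarith))

lemma one_sub_PhiCdf_le_meanWgt (b : ℝ) {c : ℝ} (hc : 0 ≤ c) :
    1 - PhiCdf c ≤ meanWgt b c := by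
  have h := integral_mono_of_nonneg (ae_of_all _ fun y => phi1_nonneg (|y| + c))
    (integrable_wgt_mul_phi1_symm b c)
    (ae_of_all _ (phi1_abs_add_le hc · b))
  rw [integral_phi1_abs_add, ← two_mul_meanWgt] at h
  linarith

lemma half_le_meanWgt {b c : ℝ} (hb : 0 ≤ b) (hc : c ≤ 0) : 1 / 2 ≤ meanWgt b c := by
  have h := integral_mono_of_nonneg
    (ae_of_all _ fun y =>
      div_nonneg (add_nonneg (phi1_nonneg (y + c)) (phi1_nonneg (y - c))) zero_le_two)
    (integrable_wgt_mul_phi1_symm b c)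
    (ae_of_all _ (phi1_average_le hb hc))
  rw [integral_div, integral_add (integrable_phi1.comp_add_right c)
    (integrable_phi1.comp_sub_right c), integral_add_right_eq_self phi1 c,
    integral_sub_right_eq_self phi1 c, integral_phi1, ← two_mul_meanWgt] at h
  linarith

lemma Pfun_eq_average_meanWgt (xa xb xθ : ℝ) :
    Pfun xa xb xθ = (meanWgt xb (xa - xθ) + meanWgt xb (xa + xθ)) / 2 := by
  rw [Pfun, ← integral_add_right_eq_self _ xa]
  simp only [add_sub_cancel_right]
  rw [meanWgt, meanWgt,
    ← integral_add ((integrable_phi1.comp_add_right _).wgt_mul continuous_id' xb)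
      ((integrable_phi1.comp_add_right _).wgt_mul continuous_id' xb), ← integral_div]
  congr 1; ext y
  rw [add_sub_assoc, add_assoc]; ring

/-- Lower bounds on `P`. -/
theorem stmt16 (xa xb xθ : ℝ) (hb : 0 ≤ xb) :
    (0 ≤ xθ → xθ ≤ xa →
      (1 - PhiCdf (xa - xθ)) / 2 + (1 - PhiCdf (xa + xθ)) / 2 ≤ Pfun xa xb xθ) ∧
    (0 ≤ xa → xa < xθ → (1 : ℝ) / 4 ≤ Pfun xa xb xθ) := by
  rw [Pfun_eq_average_meanWgt]
  refine ⟨fun hθ hle => ?_, fun _ hlt => ?_⟩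
  · have h₁ := one_sub_PhiCdf_le_meanWgt xb (sub_nonneg.2 hle)
    have h₂ := one_sub_PhiCdf_le_meanWgt xb (by linarith : 0 ≤ xa + xθ)
    linarith
  · have h₁ := half_le_meanWgt hb (by linarith : xa - xθ ≤ 0)
    have h₂ := meanWgt_nonneg xb (xa + xθ)
    linarith
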